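/- arXiv:1911.07758 — 6 statements merged into one kernel-verified Lean document; each statement's English description precedes it below -/
import Mathlib

section
/- Let Ω ⊆ ℝⁿ be nonempty closed convex, f be L-Lipschitz differentiable and bounded below on Ω by f̲, β ∈ (0, 1/L], γ ∈ (0,1), and {ω_k} ⊆ [0,∞) with Σ ω_k = ω̂ < ∞. Suppose a sequence {x_k} ⊆ Ω satisfies, with v_k = x_k − β∇f(x_k), p_k(z) = (1/2)‖z − v_k‖², and z_k* = P_Ω(v_k): (i) p_k(x_{k+1}) ≤ p_k(x_k), and (ii) p_k(x_k) − p_k(x_{k+1}) + ω_k ≥ γ(p_k(x_k) − p_k(z_k*) + ω_k). Then (1/k) Σ_{t=0}^{k−1} ‖x_t − z_t*‖² ≤ (1/k)·(2/γ)·(β(f(x_0) − f̲) + (1−γ)ω̂), so the ergodic average of the optimality residual converges at rate O(1/k). -/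
/-!
The gradient step model `p(z) = ½‖z - v‖²`, `v = x - β∇f(x)`, satisfies
`p(x) - p(y) ≤ β(f(x) - f(y))` for every `y`: expanding the squares, this is the descent lemma
for the `L`-smooth `f` together with `βL ≤ 1`. The variational inequality of the projection
gives `½‖x - z*‖² ≤ p(x) - p(z*)`, so the inexactness criterion yields
`(γ/2)‖x_t - z_t*‖² ≤ β(f(x_t) - f(x_{t+1})) + (1 - γ)ω_t`. Summing telescopes `f`, which is
bounded below on `Ω`, and the relaxation terms add up to at most `ω̂`.
-/

open scoped RealInnerProductSpace

open Finset

theorem le_add_deriv_add_of_deriv_sub_le {φ φ' : ℝ → ℝ} {K : ℝ}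
    (hφ : ∀ t, HasDerivAt φ (φ' t) t) (hK : ∀ t ∈ Set.Ioo (0 : ℝ) 1, φ' t - φ' 0 ≤ K * t) :
    φ 1 ≤ φ 0 + φ' 0 + K / 2 := by
  set g : ℝ → ℝ := fun t => φ t - t * φ' 0 - K / 2 * t ^ 2
  have hg : ∀ t, HasDerivAt g (φ' t - φ' 0 - K * t) t := by
    intro t
    exact (((hφ t).sub ((hasDerivAt_id' t).mul_const (φ' 0))).sub
      ((hasDerivAt_pow 2 t).const_mul (K / 2))).congr_deriv (by push_cast; ring)
  have hanti : AntitoneOn g (Set.Icc 0 1) := by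
    refine antitoneOn_of_hasDerivWithinAt_nonpos (convex_Icc 0 1)
      (fun t _ => (hg t).continuousAt.continuousWithinAt)
      (fun t _ => (hg t).hasDerivWithinAt) fun t ht => ?_
    rw [interior_Icc] at ht
    linarith [hK t ht]
  have := hanti (Set.left_mem_Icc.2 zero_le_one) (Set.right_mem_Icc.2 zero_le_one) zero_le_one
  simp only [g] at this
  linarith

section InnerProductSpace

variable {F : Type*} [NormedAddCommGroup F] [InnerProductSpace ℝ F]

theorem sq_norm_sub_add_sq_norm_sub_le_of_forall_norm_sub_le {Ω : Set F} (hΩ : Convex ℝ Ω)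
    {v z y : F} (hz : z ∈ Ω) (hmin : ∀ w ∈ Ω, ‖v - z‖ ≤ ‖v - w‖) (hy : y ∈ Ω) :
    ‖y - z‖ ^ 2 + ‖z - v‖ ^ 2 ≤ ‖y - v‖ ^ 2 := by
  have hnonempty : Nonempty Ω := ⟨⟨z, hz⟩⟩
  have hinf : ‖v - z‖ = ⨅ w : Ω, ‖v - w‖ :=
    le_antisymm (le_ciInf fun w => hmin w w.2)
      (ciInf_le ⟨0, Set.forall_mem_range.2 fun _ => norm_nonneg _⟩ (⟨z, hz⟩ : Ω))
  have hvar : ⟪v - z, y - z⟫ ≤ 0 := (norm_eq_iInf_iff_real_inner_le_zero hΩ hz).1 hinf y hy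
  have hexpand := norm_add_sq_real (y - z) (z - v)
  rw [sub_add_sub_cancel, ← neg_sub v z, inner_neg_right, real_inner_comm, norm_neg,
    norm_sub_rev v z] at hexpand
  linarith

variable [CompleteSpace F]

theorem le_add_inner_gradient_add_of_gradient_lipschitz {f : F → ℝ} (hf : Differentiable ℝ f)
    {L : ℝ} (hlip : ∀ x y, ‖gradient f x - gradient f y‖ ≤ L * ‖x - y‖) (x y : F) :
    f y ≤ f x + ⟪gradient f x, y - x⟫ + L / 2 * ‖y - x‖ ^ 2 := by
  set d := y - x
  have hline : ∀ t : ℝ, HasDerivAt (fun t : ℝ => f (x + t • d)) ⟪gradient f (x + t • d), d⟫ t := by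
    intro t
    rw [inner_gradient_left]
    exact (hf _).hasFDerivAt.comp_hasDerivAt t
      (((hasDerivAt_id t).smul_const d).const_add x |>.congr_deriv (one_smul ℝ d))
  have hbound : ∀ t ∈ Set.Ioo (0 : ℝ) 1,
      ⟪gradient f (x + t • d), d⟫ - ⟪gradient f (x + (0 : ℝ) • d), d⟫ ≤ L * ‖d‖ ^ 2 * t := by
    intro t ht
    calc ⟪gradient f (x + t • d), d⟫ - ⟪gradient f (x + (0 : ℝ) • d), d⟫
        = ⟪gradient f (x + t • d) - gradient f x, d⟫ := by rw [zero_smul, add_zero, inner_sub_left]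
      _ ≤ ‖gradient f (x + t • d) - gradient f x‖ * ‖d‖ := real_inner_le_norm _ _
      _ ≤ L * ‖(x + t • d) - x‖ * ‖d‖ := by gcongr; exact hlip _ _
      _ = L * ‖d‖ ^ 2 * t := by
        rw [add_sub_cancel_left, norm_smul, Real.norm_of_nonneg ht.1.le]
        ring
  have := le_add_deriv_add_of_deriv_sub_le hline hbound
  simp only [zero_smul, add_zero, one_smul, d, add_sub_cancel] at this
  linarith

theorem half_sq_norm_sub_gradient_step_sub_le {f : F → ℝ} (hf : Differentiable ℝ f) {L : ℝ}
    (hlip : ∀ x y, ‖gradient f x - gradient f y‖ ≤ L * ‖x - y‖) {β : ℝ} (hβ : 0 ≤ β)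
    (hβL : β * L ≤ 1) (x y : F) :
    1 / 2 * ‖x - (x - β • gradient f x)‖ ^ 2 - 1 / 2 * ‖y - (x - β • gradient f x)‖ ^ 2 ≤
      β * (f x - f y) := by
  set g := gradient f x
  have hdesc := le_add_inner_gradient_add_of_gradient_lipschitz hf hlip x y
  have hx : x - (x - β • g) = β • g := sub_sub_cancel x _
  have hy : y - (x - β • g) = (y - x) + β • g := by abel
  rw [hx, hy, norm_add_sq_real, real_inner_smul_right, real_inner_comm, norm_smul,
    Real.norm_of_nonneg hβ]
  linarith [mul_le_mul_of_nonneg_left hdesc hβ, mul_le_mul_of_nonneg_right hβL (sq_nonneg ‖y - x‖)]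

end InnerProductSpace

theorem mul_sum_range_le_of_le_sub_succ {r s u : ℕ → ℝ} {c β : ℝ}
    (h : ∀ t, c * r t ≤ β * (u t - u (t + 1)) + s t) (k : ℕ) :
    c * ∑ t ∈ range k, r t ≤ β * (u 0 - u k) + ∑ t ∈ range k, s t := by
  calc c * ∑ t ∈ range k, r t
      ≤ ∑ t ∈ range k, (β * (u t - u (t + 1)) + s t) := by
        rw [mul_sum]; exact sum_le_sum fun t _ => h t
    _ = β * (u 0 - u k) + ∑ t ∈ range k, s t := by
        rw [sum_add_distrib, ← mul_sum, sum_range_sub' u]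

theorem stmt_7_general {n : ℕ} (Ω : Set (EuclideanSpace ℝ (Fin n)))
    (hconv : Convex ℝ Ω)
    (f : EuclideanSpace ℝ (Fin n) → ℝ) (hf : Differentiable ℝ f)
    (L : ℝ) (hL : 0 < L)
    (hlip : ∀ x y, ‖gradient f x - gradient f y‖ ≤ L * ‖x - y‖)
    (flb : ℝ) (hbelow : ∀ y ∈ Ω, flb ≤ f y)
    (β γ : ℝ) (hβ0 : 0 < β) (hβL : β ≤ 1 / L) (hγ0 : 0 < γ) (hγ1 : γ < 1)
    (ω : ℕ → ℝ) (hω : ∀ k, 0 ≤ ω k) (ωhat : ℝ) (hsum : HasSum ω ωhat)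
    (x zs v : ℕ → EuclideanSpace ℝ (Fin n))
    (hxΩ : ∀ k, x k ∈ Ω)
    (hv : ∀ k, v k = x k - β • gradient f (x k))
    (hzsΩ : ∀ k, zs k ∈ Ω)
    (hproj : ∀ k, ∀ y ∈ Ω, ‖v k - zs k‖ ≤ ‖v k - y‖)
    (hineq : ∀ k, (1/2) * ‖x k - v k‖^2 - (1/2) * ‖x (k+1) - v k‖^2 + ω k ≥
      γ * ((1/2) * ‖x k - v k‖^2 - (1/2) * ‖zs k - v k‖^2 + ω k)) :
    ∀ k : ℕ, 0 < k →
      (1 / (k : ℝ)) * ∑ t ∈ Finset.range k, ‖x t - zs t‖^2 ≤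
        (1 / (k : ℝ)) * ((2 / γ) * (β * (f (x 0) - flb) + (1 - γ) * ωhat)) := by
  have hβL' : β * L ≤ 1 := (le_div_iff₀ hL).1 hβL
  have hstep : ∀ t, γ / 2 * ‖x t - zs t‖ ^ 2 ≤ β * (f (x t) - f (x (t + 1))) + (1 - γ) * ω t := by
    intro t
    have hres := sq_norm_sub_add_sq_norm_sub_le_of_forall_norm_sub_le hconv (hzsΩ t) (hproj t)
      (hxΩ t)
    have hmodel := half_sq_norm_sub_gradient_step_sub_le hf hlip hβ0.le hβL' (x t) (x (t + 1))
    rw [← hv] at hmodel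
    linarith [hineq t, mul_le_mul_of_nonneg_left hres hγ0.le]
  intro k _
  have htotal := mul_sum_range_le_of_le_sub_succ hstep k
  have hfk : flb ≤ f (x k) := hbelow _ (hxΩ k)
  have hωk : ∑ t ∈ range k, ω t ≤ ωhat := sum_le_hasSum _ (fun t _ => hω t) hsum
  rw [← mul_sum] at htotal
  gcongr
  rw [div_mul_eq_mul_div, le_div_iff₀ hγ0]
  linarith [mul_le_mul_of_nonneg_left hfk hβ0.le,
    mul_le_mul_of_nonneg_left hωk (sub_nonneg.2 hγ1.le)]

/-- O(1/k) ergodic complexity of the inexact gradient projection method without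
line search: the ergodic average of the optimality residual is bounded by
(1/k)·(2/γ)·(β(f(x₀) - f̲) + (1-γ)ω̂). -/
theorem stmt_7 {n : ℕ} (Ω : Set (EuclideanSpace ℝ (Fin n)))
    (hne : Ω.Nonempty) (hclosed : IsClosed Ω) (hconv : Convex ℝ Ω)
    (f : EuclideanSpace ℝ (Fin n) → ℝ) (hf : Differentiable ℝ f)
    (L : ℝ) (hL : 0 < L)
    (hlip : ∀ x y, ‖gradient f x - gradient f y‖ ≤ L * ‖x - y‖)
    (flb : ℝ) (hbelow : ∀ y ∈ Ω, flb ≤ f y)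
    (β γ : ℝ) (hβ0 : 0 < β) (hβL : β ≤ 1 / L) (hγ0 : 0 < γ) (hγ1 : γ < 1)
    (ω : ℕ → ℝ) (hω : ∀ k, 0 ≤ ω k) (ωhat : ℝ) (hsum : HasSum ω ωhat)
    (x zs v : ℕ → EuclideanSpace ℝ (Fin n))
    (hxΩ : ∀ k, x k ∈ Ω)
    (hv : ∀ k, v k = x k - β • gradient f (x k))
    (hzsΩ : ∀ k, zs k ∈ Ω)
    (hproj : ∀ k, ∀ y ∈ Ω, ‖v k - zs k‖ ≤ ‖v k - y‖)
    (hdec : ∀ k, (1/2) * ‖x (k+1) - v k‖^2 ≤ (1/2) * ‖x k - v k‖^2)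
    (hineq : ∀ k, (1/2) * ‖x k - v k‖^2 - (1/2) * ‖x (k+1) - v k‖^2 + ω k ≥
      γ * ((1/2) * ‖x k - v k‖^2 - (1/2) * ‖zs k - v k‖^2 + ω k)) :
    ∀ k : ℕ, 0 < k →
      (1 / (k : ℝ)) * ∑ t ∈ Finset.range k, ‖x t - zs t‖^2 ≤
        (1 / (k : ℝ)) * ((2 / γ) * (β * (f (x 0) - flb) + (1 - γ) * ωhat)) :=
  stmt_7_general Ω hconv f hf L hL hlip flb hbelow β γ hβ0 hβL hγ0 hγ1 ω hω ωhat hsum x zs v hxΩ hv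
    hzsΩ hproj hineq
end

section
/- Under the same hypotheses as the preceding complexity theorem (iterates {x_k} of the inexact gradient projection method without line search, with p_k(x_{k+1}) ≤ p_k(x_k) and the γ-duality-gap termination condition, Σ ω_k < ∞, f bounded below), the sequences p_k(x_k) − p_k(x_{k+1}) and p_k(x_k) − p_k(z_k*) both converge to 0 as k → ∞. -/
open scoped RealInnerProductSpace

/-! By the descent lemma, a gradient step with `β ≤ 1/L` satisfies
`p_k(x_k) - p_k(y) ≤ β (f(x_k) - f(y))` for every `y`. Taking `y = x_{k+1}`, the nonnegative
decreases `p_k(x_k) - p_k(x_{k+1})` are bounded by `β` times the decrements of the antitone,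
bounded-below sequence `f(x_k)`, so they tend to `0`. The `γ`-condition then bounds
`γ (p_k(x_k) - p_k(z_k*))` by that decrease plus `(1 - γ) ω_k`, and `ω_k → 0`. -/

open Filter Topology

section Descent

variable {E : Type*} [NormedAddCommGroup E] [InnerProductSpace ℝ E] [CompleteSpace E]
  {f : E → ℝ} {L : ℝ}

lemma DifferentiableAt.hasDerivAt_comp_add_smul {x d : E} {t : ℝ}
    (hf : DifferentiableAt ℝ f (x + t • d)) :
    HasDerivAt (fun s : ℝ => f (x + s • d)) ⟪gradient f (x + t • d), d⟫ t := by
  have hline : HasDerivAt (fun s : ℝ => x + s • d) d t := by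
    simpa using ((hasDerivAt_id t).smul_const d).const_add x
  exact hf.hasGradientAt.hasFDerivAt.comp_hasDerivAt t hline

lemma inner_gradient_add_smul_sub_le (hlip : ∀ x y, ‖gradient f x - gradient f y‖ ≤ L * ‖x - y‖)
    (x d : E) {t : ℝ} (ht : 0 ≤ t) :
    ⟪gradient f (x + t • d) - gradient f x, d⟫ ≤ L * t * ‖d‖ ^ 2 :=
  calc ⟪gradient f (x + t • d) - gradient f x, d⟫
      ≤ ‖gradient f (x + t • d) - gradient f x‖ * ‖d‖ := real_inner_le_norm _ _
    _ ≤ L * ‖t • d‖ * ‖d‖ := by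
        gcongr
        simpa using hlip (x + t • d) x
    _ = L * t * ‖d‖ ^ 2 := by rw [norm_smul, Real.norm_of_nonneg ht]; ring

theorem le_add_inner_gradient_add_sq (hf : Differentiable ℝ f)
    (hlip : ∀ x y, ‖gradient f x - gradient f y‖ ≤ L * ‖x - y‖) (x y : E) :
    f y ≤ f x + ⟪gradient f x, y - x⟫ + L / 2 * ‖y - x‖ ^ 2 := by
  set d := y - x
  set φ : ℝ → ℝ := fun t => f (x + t • d) - t * ⟪gradient f x, d⟫ - L / 2 * t ^ 2 * ‖d‖ ^ 2
  have hφ (t : ℝ) :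
      HasDerivAt φ (⟪gradient f (x + t • d) - gradient f x, d⟫ - L * t * ‖d‖ ^ 2) t := by
    have hsq := ((hasDerivAt_pow 2 t).const_mul (L / 2)).mul_const (‖d‖ ^ 2)
    refine (((hf (x + t • d)).hasDerivAt_comp_add_smul.sub
      ((hasDerivAt_id' t).mul_const ⟪gradient f x, d⟫)).sub hsq).congr_deriv ?_
    rw [inner_sub_left]; push_cast; ring
  have hanti : AntitoneOn φ (Set.Ici 0) :=
    antitoneOn_of_hasDerivWithinAt_nonpos (convex_Ici 0)
      (fun t _ => (hφ t).continuousAt.continuousWithinAt)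
      (fun t _ => (hφ t).hasDerivWithinAt)
      (fun t ht => sub_nonpos.2 <| inner_gradient_add_smul_sub_le hlip x d <|
        le_of_lt (by simpa using ht))
  have h10 : φ 1 ≤ φ 0 := hanti Set.self_mem_Ici (Set.mem_Ici.2 zero_le_one) zero_le_one
  simp only [φ, d, one_smul, zero_smul, add_zero, one_mul, zero_mul, one_pow, mul_one, sub_zero,
    add_sub_cancel, ne_eq, OfNat.ofNat_ne_zero, not_false_eq_true, zero_pow, mul_zero] at h10
  linarith

theorem half_sq_sub_half_sq_le_mul_sub_of_gradient_step (hf : Differentiable ℝ f)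
    (hlip : ∀ x y, ‖gradient f x - gradient f y‖ ≤ L * ‖x - y‖) {β : ℝ} (hβ0 : 0 ≤ β)
    (hβL : β * L ≤ 1) {x v : E} (hv : v = x - β • gradient f x) (y : E) :
    (1/2) * ‖x - v‖ ^ 2 - (1/2) * ‖y - v‖ ^ 2 ≤ β * (f x - f y) := by
  have hxv : x - v = β • gradient f x := by rw [hv, sub_sub_cancel]
  have hyv : y - v = (y - x) + β • gradient f x := by rw [hv]; abel
  have hdescent := le_add_inner_gradient_add_sq hf hlip x y
  rw [hxv, hyv, norm_add_sq_real, real_inner_smul_right, real_inner_comm]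
  nlinarith [mul_le_mul_of_nonneg_left hdescent hβ0,
    mul_nonneg (sub_nonneg.2 hβL) (sq_nonneg ‖y - x‖)]

end Descent

lemma Antitone.tendsto_sub_succ_atTop_zero {F : ℕ → ℝ} (hF : Antitone F)
    (hbdd : BddBelow (Set.range F)) : Tendsto (fun k => F k - F (k + 1)) atTop (𝓝 0) := by
  have hlim := tendsto_atTop_ciInf hF hbdd
  simpa using hlim.sub (hlim.comp (tendsto_add_atTop_nat 1))

lemma tendsto_zero_of_mul_add_le_add {a b ω : ℕ → ℝ} {γ : ℝ} (hγ : 0 < γ) (hb : ∀ k, 0 ≤ b k)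
    (hab : ∀ k, γ * (b k + ω k) ≤ a k + ω k) (ha : Tendsto a atTop (𝓝 0))
    (hω : Tendsto ω atTop (𝓝 0)) : Tendsto b atTop (𝓝 0) := by
  have hbound : ∀ k, b k ≤ (a k + (1 - γ) * ω k) / γ := fun k => by
    rw [le_div_iff₀ hγ]; linarith [hab k]
  refine squeeze_zero hb hbound ?_
  simpa using (ha.add (hω.const_mul (1 - γ))).div_const γ

theorem stmt_8_general {n : ℕ} (Ω : Set (EuclideanSpace ℝ (Fin n)))
    (f : EuclideanSpace ℝ (Fin n) → ℝ) (hf : Differentiable ℝ f)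
    (L : ℝ) (hL : 0 < L)
    (hlip : ∀ x y, ‖gradient f x - gradient f y‖ ≤ L * ‖x - y‖)
    (flb : ℝ) (hbelow : ∀ y ∈ Ω, flb ≤ f y)
    (β γ : ℝ) (hβ0 : 0 < β) (hβL : β ≤ 1 / L) (hγ0 : 0 < γ)
    (ω : ℕ → ℝ) (ωhat : ℝ) (hsum : HasSum ω ωhat)
    (x zs v : ℕ → EuclideanSpace ℝ (Fin n))
    (hxΩ : ∀ k, x k ∈ Ω)
    (hv : ∀ k, v k = x k - β • gradient f (x k))
    (hproj : ∀ k, ∀ y ∈ Ω, ‖v k - zs k‖ ≤ ‖v k - y‖)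
    (hdec : ∀ k, (1/2) * ‖x (k+1) - v k‖^2 ≤ (1/2) * ‖x k - v k‖^2)
    (hineq : ∀ k, (1/2) * ‖x k - v k‖^2 - (1/2) * ‖x (k+1) - v k‖^2 + ω k ≥
      γ * ((1/2) * ‖x k - v k‖^2 - (1/2) * ‖zs k - v k‖^2 + ω k)) :
    Filter.Tendsto (fun k => (1/2) * ‖x k - v k‖^2 - (1/2) * ‖x (k+1) - v k‖^2)
      Filter.atTop (nhds 0) ∧
    Filter.Tendsto (fun k => (1/2) * ‖x k - v k‖^2 - (1/2) * ‖zs k - v k‖^2)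
      Filter.atTop (nhds 0) := by
  have hβL_mul : β * L ≤ 1 := by rwa [le_div_iff₀ hL] at hβL
  have hstep k :=
    half_sq_sub_half_sq_le_mul_sub_of_gradient_step hf hlip hβ0.le hβL_mul (hv k) (x (k + 1))
  have hanti : Antitone (fun k => f (x k)) := antitone_nat_of_succ_le fun k =>
    sub_nonneg.1 <| (mul_nonneg_iff_of_pos_left hβ0).1 <| by linarith [hstep k, hdec k]
  have hbdd : BddBelow (Set.range fun k => f (x k)) := ⟨flb, by
    rintro _ ⟨k, rfl⟩; exact hbelow (x k) (hxΩ k)⟩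
  have hstep_lim : Tendsto (fun k => (1/2) * ‖x k - v k‖^2 - (1/2) * ‖x (k+1) - v k‖^2)
      atTop (𝓝 0) :=
    squeeze_zero (fun k => by linarith [hdec k]) hstep
      (by simpa using (hanti.tendsto_sub_succ_atTop_zero hbdd).const_mul β)
  refine ⟨hstep_lim, tendsto_zero_of_mul_add_le_add hγ0 (fun k => ?_) hineq hstep_lim
    hsum.summable.tendsto_atTop_zero⟩
  have hzs : ‖zs k - v k‖ ≤ ‖x k - v k‖ := by
    simpa only [norm_sub_rev _ (v k)] using hproj k (x k) (hxΩ k)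
  nlinarith [pow_le_pow_left₀ (norm_nonneg _) hzs 2]

/-- For the inexact gradient projection method without line search, the subproblem
objective reductions induced by the inexact iterate and by the exact projection
both converge to zero. -/
theorem stmt_8 {n : ℕ} (Ω : Set (EuclideanSpace ℝ (Fin n)))
    (hne : Ω.Nonempty) (hclosed : IsClosed Ω) (hconv : Convex ℝ Ω)
    (f : EuclideanSpace ℝ (Fin n) → ℝ) (hf : Differentiable ℝ f)
    (L : ℝ) (hL : 0 < L)
    (hlip : ∀ x y, ‖gradient f x - gradient f y‖ ≤ L * ‖x - y‖)
    (flb : ℝ) (hbelow : ∀ y ∈ Ω, flb ≤ f y)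
    (β γ : ℝ) (hβ0 : 0 < β) (hβL : β ≤ 1 / L) (hγ0 : 0 < γ) (hγ1 : γ < 1)
    (ω : ℕ → ℝ) (hω : ∀ k, 0 ≤ ω k) (ωhat : ℝ) (hsum : HasSum ω ωhat)
    (x zs v : ℕ → EuclideanSpace ℝ (Fin n))
    (hxΩ : ∀ k, x k ∈ Ω)
    (hv : ∀ k, v k = x k - β • gradient f (x k))
    (hzsΩ : ∀ k, zs k ∈ Ω)
    (hproj : ∀ k, ∀ y ∈ Ω, ‖v k - zs k‖ ≤ ‖v k - y‖)
    (hdec : ∀ k, (1/2) * ‖x (k+1) - v k‖^2 ≤ (1/2) * ‖x k - v k‖^2)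
    (hineq : ∀ k, (1/2) * ‖x k - v k‖^2 - (1/2) * ‖x (k+1) - v k‖^2 + ω k ≥
      γ * ((1/2) * ‖x k - v k‖^2 - (1/2) * ‖zs k - v k‖^2 + ω k)) :
    Filter.Tendsto (fun k => (1/2) * ‖x k - v k‖^2 - (1/2) * ‖x (k+1) - v k‖^2)
      Filter.atTop (nhds 0) ∧
    Filter.Tendsto (fun k => (1/2) * ‖x k - v k‖^2 - (1/2) * ‖zs k - v k‖^2)
      Filter.atTop (nhds 0) :=
  stmt_8_general Ω f hf L hL hlip flb hbelow β γ hβ0 hβL hγ0 ω ωhat hsum x zs v hxΩ hv hproj hdec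
    hineq
end

section
/- Under the hypotheses of the inexact gradient projection method without line search (x_{k+1} ∈ Ω with p_k(x_{k+1}) ≤ p_k(x_k) and the γ-inexactness condition, summable ω_k, f L-Lipschitz differentiable and bounded below on Ω, 0 < β ≤ 1/L), the optimality residual E(x_k; β) = ‖x_k − P_Ω(x_k − β∇f(x_k))‖² converges to 0 as k → ∞. -/
open scoped RealInnerProductSpace

section aux

variable {n : ℕ}

local notation "E" => EuclideanSpace ℝ (Fin n)

lemma fderiv_eq_inner_gradient (f : E → ℝ) (z y : E) :
    fderiv ℝ f z y = ⟪gradient f z, y⟫ := by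
  rw [gradient]
  have := (InnerProductSpace.toDual ℝ (EuclideanSpace ℝ (Fin n))).apply_symm_apply (fderiv ℝ f z)
  conv_lhs => rw [← this]
  simp [InnerProductSpace.toDual_apply_apply]

/-- Descent lemma for L-Lipschitz gradient. -/
lemma descent_lemma (f : E → ℝ) (hf : Differentiable ℝ f) (L : ℝ) (hL : 0 ≤ L)
    (hlip : ∀ a b, ‖gradient f a - gradient f b‖ ≤ L * ‖a - b‖) (x y : E) :
    f y ≤ f x + ⟪gradient f x, y - x⟫ + L / 2 * ‖y - x‖ ^ 2 := by
  set d : E := y - x with hd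
  set g : ℝ → ℝ := fun t => f (x + t • d) - t * ⟪gradient f x, d⟫ - L / 2 * t ^ 2 * ‖d‖ ^ 2
    with hg
  have hline : ∀ t : ℝ, HasDerivAt (fun t : ℝ => x + t • d) d t := by
    intro t
    simpa using ((hasDerivAt_id t).smul_const d).const_add x
  have hcomp : ∀ t : ℝ, HasDerivAt (fun t : ℝ => f (x + t • d))
      (fderiv ℝ f (x + t • d) d) t := by
    intro t
    exact (hf (x + t • d)).hasFDerivAt.comp_hasDerivAt t (hline t)
  have hderiv : ∀ t : ℝ, HasDerivAt g
      (fderiv ℝ f (x + t • d) d - ⟪gradient f x, d⟫ - L / 2 * (2 * t) * ‖d‖ ^ 2) t := by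
    intro t
    have h1 : HasDerivAt (fun t : ℝ => t * ⟪gradient f x, d⟫) ⟪gradient f x, d⟫ t := by
      simpa using (hasDerivAt_id t).mul_const ⟪gradient f x, d⟫
    have h2 : HasDerivAt (fun t : ℝ => L / 2 * t ^ 2 * ‖d‖ ^ 2)
        (L / 2 * (2 * t) * ‖d‖ ^ 2) t := by
      have := ((hasDerivAt_pow 2 t).const_mul (L / 2)).mul_const (‖d‖ ^ 2)
      simpa [mul_comm, mul_assoc, mul_left_comm] using this
    exact ((hcomp t).sub h1).sub h2
  have hgdiff : Differentiable ℝ g := fun t => (hderiv t).differentiableAt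
  have hanti : AntitoneOn g (Set.Icc (0:ℝ) 1) := by
    apply antitoneOn_of_deriv_nonpos (convex_Icc 0 1) hgdiff.continuous.continuousOn
      hgdiff.differentiableOn
    intro t ht
    rw [interior_Icc] at ht
    rw [(hderiv t).deriv]
    have hfd : fderiv ℝ f (x + t • d) d - ⟪gradient f x, d⟫
        = ⟪gradient f (x + t • d) - gradient f x, d⟫ := by
      rw [fderiv_eq_inner_gradient, inner_sub_left]
    rw [hfd]
    have hcs : ⟪gradient f (x + t • d) - gradient f x, d⟫
        ≤ ‖gradient f (x + t • d) - gradient f x‖ * ‖d‖ := real_inner_le_norm _ _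
    have hl : ‖gradient f (x + t • d) - gradient f x‖ ≤ L * ‖t • d‖ := by
      have := hlip (x + t • d) x
      simpa using this
    have hnt : ‖t • d‖ = t * ‖d‖ := by
      rw [norm_smul, Real.norm_eq_abs, abs_of_pos ht.1]
    rw [hnt] at hl
    have hchain : ⟪gradient f (x + t • d) - gradient f x, d⟫ ≤ L * (t * ‖d‖) * ‖d‖ :=
      le_trans hcs (by
        have := mul_le_mul_of_nonneg_right hl (norm_nonneg d)
        linarith)
    nlinarith [hchain]
  have h01 := hanti (Set.mem_Icc.mpr ⟨le_refl 0, zero_le_one⟩)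
    (Set.mem_Icc.mpr ⟨zero_le_one, le_refl 1⟩) zero_le_one
  have hg0 : g 0 = f x := by simp [hg]
  have hg1 : g 1 = f y - ⟪gradient f x, d⟫ - L / 2 * ‖d‖ ^ 2 := by
    simp [hg, hd]
  rw [hg0, hg1] at h01
  linarith

end aux

/-- For the inexact gradient projection method without line search, the optimality
residual E(x_k; β) = ‖x_k - P_Ω(x_k - β∇f(x_k))‖² converges to zero. -/
theorem stmt_9 {n : ℕ} (Ω : Set (EuclideanSpace ℝ (Fin n)))
    (hne : Ω.Nonempty) (hclosed : IsClosed Ω) (hconv : Convex ℝ Ω)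
    (f : EuclideanSpace ℝ (Fin n) → ℝ) (hf : Differentiable ℝ f)
    (L : ℝ) (hL : 0 < L)
    (hlip : ∀ x y, ‖gradient f x - gradient f y‖ ≤ L * ‖x - y‖)
    (flb : ℝ) (hbelow : ∀ y ∈ Ω, flb ≤ f y)
    (β γ : ℝ) (hβ0 : 0 < β) (hβL : β ≤ 1 / L) (hγ0 : 0 < γ) (hγ1 : γ < 1)
    (ω : ℕ → ℝ) (hω : ∀ k, 0 ≤ ω k) (ωhat : ℝ) (hsum : HasSum ω ωhat)
    (x zs v : ℕ → EuclideanSpace ℝ (Fin n))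
    (hxΩ : ∀ k, x k ∈ Ω)
    (hv : ∀ k, v k = x k - β • gradient f (x k))
    (hzsΩ : ∀ k, zs k ∈ Ω)
    (hproj : ∀ k, ∀ y ∈ Ω, ‖v k - zs k‖ ≤ ‖v k - y‖)
    (hdec : ∀ k, (1/2) * ‖x (k+1) - v k‖^2 ≤ (1/2) * ‖x k - v k‖^2)
    (hineq : ∀ k, (1/2) * ‖x k - v k‖^2 - (1/2) * ‖x (k+1) - v k‖^2 + ω k ≥
      γ * ((1/2) * ‖x k - v k‖^2 - (1/2) * ‖zs k - v k‖^2 + ω k)) :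
    Filter.Tendsto (fun k => ‖x k - zs k‖^2) Filter.atTop (nhds 0) := by
  -- projection variational inequality
  have hproj' : ∀ k, ∀ y ∈ Ω, ⟪v k - zs k, y - zs k⟫ ≤ 0 := by
    intro k
    haveI : Nonempty Ω := hne.to_subtype
    have hmin : ‖v k - zs k‖ = ⨅ w : Ω, ‖v k - w‖ := by
      apply le_antisymm
      · exact le_ciInf fun w => hproj k w w.2
      · exact ciInf_le ⟨0, fun r ⟨w, hw⟩ => hw ▸ norm_nonneg _⟩ (⟨zs k, hzsΩ k⟩ : Ω)
    exact (norm_eq_iInf_iff_real_inner_le_zero hconv (hzsΩ k)).mp hmin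
  -- per-step key inequality
  have key : ∀ k, γ / 2 * ‖x k - zs k‖ ^ 2
      ≤ β * (f (x k) - f (x (k+1))) + ω k := by
    intro k
    set g := gradient f (x k) with hgdef
    set d := x (k+1) - x k with hddef
    -- A - C ≥ (1/2) E
    have hxv : x k - v k = β • g := by rw [hv k]; abel
    have hexp1 : ‖x k - v k‖ ^ 2
        = ‖x k - zs k‖ ^ 2 + 2 * ⟪x k - zs k, zs k - v k⟫ + ‖zs k - v k‖ ^ 2 := by
      have : x k - v k = (x k - zs k) + (zs k - v k) := by abel
      rw [this, norm_add_sq_real]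
    have hip : 0 ≤ ⟪x k - zs k, zs k - v k⟫ := by
      have h0 := hproj' k (x k) (hxΩ k)
      have hh : ⟪x k - zs k, zs k - v k⟫ = - ⟪v k - zs k, x k - zs k⟫ := by
        rw [show zs k - v k = -(v k - zs k) by abel, inner_neg_right, real_inner_comm]
      rw [hh]
      linarith
    -- A - B in terms of d, g
    have hxv1 : x (k+1) - v k = d + β • g := by rw [hv k, hddef]; abel
    have hexp2 : ‖x (k+1) - v k‖ ^ 2
        = ‖d‖ ^ 2 + 2 * (β * ⟪d, g⟫) + β ^ 2 * ‖g‖ ^ 2 := by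
      rw [hxv1, norm_add_sq_real, real_inner_smul_right, norm_smul, Real.norm_eq_abs,
        abs_of_pos hβ0, mul_pow]
    have hnormxv : ‖x k - v k‖ ^ 2 = β ^ 2 * ‖g‖ ^ 2 := by
      rw [hxv, norm_smul, Real.norm_eq_abs, abs_of_pos hβ0, mul_pow]
    -- from hineq: -β⟪d,g⟫ - ½‖d‖² ≥ γ/2 E - ω
    have hstep : - (β * ⟪d, g⟫) - (1/2) * ‖d‖ ^ 2 ≥ γ / 2 * ‖x k - zs k‖ ^ 2 - ω k := by
      have h1 := hineq k
      have hE : (0:ℝ) ≤ ‖x k - zs k‖ ^ 2 := by positivity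
      nlinarith [hω k, hγ0.le, hγ1.le]
    -- descent lemma
    have hdesc := descent_lemma f hf L hL.le hlip (x k) (x (k+1))
    rw [← hgdef, ← hddef] at hdesc
    have hLβ : L * β ≤ 1 := by
      have := (le_div_iff₀ hL).mp hβL
      linarith [mul_comm β L ▸ this]
    have hgd : ⟪g, d⟫ = ⟪d, g⟫ := real_inner_comm _ _
    have hd2 : (0:ℝ) ≤ ‖d‖ ^ 2 := by positivity
    nlinarith [hstep, mul_le_mul_of_nonneg_left hdesc hβ0.le,
      mul_le_mul_of_nonneg_right hLβ hd2]
  -- summability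
  set c := γ / 2 with hc
  have hcpos : 0 < c := by positivity
  have hEnn : ∀ k, (0:ℝ) ≤ ‖x k - zs k‖ ^ 2 := fun k => by positivity
  have hsummable : Summable (fun k => c * ‖x k - zs k‖ ^ 2) := by
    apply summable_of_sum_range_le (c := β * (f (x 0) - flb) + ωhat)
      (fun k => by positivity)
    intro N
    have htel : ∑ i ∈ Finset.range N, (f (x i) - f (x (i+1))) = f (x 0) - f (x N) := by
      induction N with
      | zero => simp
      | succ m ih => rw [Finset.sum_range_succ, ih]; ring
    calc ∑ i ∈ Finset.range N, c * ‖x i - zs i‖ ^ 2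
        ≤ ∑ i ∈ Finset.range N, (β * (f (x i) - f (x (i+1))) + ω i) :=
          Finset.sum_le_sum fun i _ => key i
      _ = β * (f (x 0) - f (x N)) + ∑ i ∈ Finset.range N, ω i := by
          rw [Finset.sum_add_distrib, ← Finset.mul_sum, htel]
      _ ≤ β * (f (x 0) - flb) + ωhat := by
          have h1 : flb ≤ f (x N) := hbelow _ (hxΩ N)
          have h2 : ∑ i ∈ Finset.range N, ω i ≤ ωhat :=
            sum_le_hasSum _ (fun i _ => hω i) hsum
          nlinarith
  have hsummable' : Summable (fun k => ‖x k - zs k‖ ^ 2) :=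
    (summable_mul_left_iff hcpos.ne').mp hsummable
  exact hsummable'.tendsto_atTop_zero
end

section
/- Let v ∈ ℝⁿ with all components nonnegative and let τ > 0. There exists a unique ν ∈ ℝ such that Σ_{i=1}^n max(v_i − ν, 0) = τ, and the Euclidean projection of v onto the simplex S(τ,n) = {x : Σx_i = τ, x ≥ 0} is given componentwise by (P_S(v))_i = max(v_i − ν, 0). -/
/-!
The map `ν ↦ ∑ i, max (v i - ν) 0` is continuous, vanishes at `ν = max v` and is at least `τ`
at `ν = v i₀ - τ`, so it takes the value `τ`; it is strictly decreasing wherever it is positive,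
so that `ν` is unique. For `x = max (v - ν) 0` and `y ≥ 0` one has coordinatewise
`(vᵢ - xᵢ)(yᵢ - xᵢ) ≤ ν (yᵢ - xᵢ)`, and summing over a `y` with the same coordinate sum as `x`
gives `⟪v - x, y - x⟫ ≤ 0`, the obtuse-angle criterion for `x` to be nearer to `v` than `y`.
-/

open Finset RealInnerProductSpace

theorem norm_sub_le_norm_sub_of_inner_le_zero {E : Type*} [NormedAddCommGroup E]
    [InnerProductSpace ℝ E] {u x y : E} (h : ⟪u - x, y - x⟫ ≤ 0) : ‖u - x‖ ≤ ‖u - y‖ := by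
  have hsq : ‖u - y‖ ^ 2 = ‖u - x‖ ^ 2 - 2 * ⟪u - x, y - x⟫ + ‖y - x‖ ^ 2 := by
    rw [show u - y = (u - x) - (y - x) by abel, norm_sub_sq_real]
  refine (pow_le_pow_iff_left₀ (norm_nonneg _) (norm_nonneg _) two_ne_zero).1 ?_
  rw [hsq]
  nlinarith [sq_nonneg ‖y - x‖]

section
variable {ι : Type*} [Fintype ι]

theorem continuous_sum_max_sub (v : ι → ℝ) : Continuous fun ν => ∑ i, max (v i - ν) 0 := by
  fun_prop

theorem sum_max_sub_lt_of_lt {v : ι → ℝ} {a b : ℝ} (hab : a < b)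
    (hb : 0 < ∑ i, max (v i - b) 0) : ∑ i, max (v i - b) 0 < ∑ i, max (v i - a) 0 := by
  obtain ⟨i, -, hi⟩ := exists_lt_of_sum_lt (f := fun _ => (0 : ℝ)) (by simpa using hb)
  have hvi : 0 < v i - b := by simpa using hi
  refine sum_lt_sum (fun j _ => by gcongr) ⟨i, mem_univ i, ?_⟩
  rw [max_eq_left hvi.le]
  exact lt_max_of_lt_left (by linarith)

theorem exists_sum_max_sub_eq [Nonempty ι] (v : ι → ℝ) {τ : ℝ} (hτ : 0 ≤ τ) :
    ∃ ν, ∑ i, max (v i - ν) 0 = τ := by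
  obtain ⟨i₀⟩ := ‹Nonempty ι›
  set M := univ.sup' univ_nonempty v
  have hM : ∑ i, max (v i - M) 0 = 0 :=
    sum_eq_zero fun i _ => max_eq_right (sub_nonpos.2 (le_sup' v (mem_univ i)))
  have hlow : τ ≤ ∑ i, max (v i - (v i₀ - τ)) 0 :=
    calc τ ≤ max (v i₀ - (v i₀ - τ)) 0 := by simp
      _ ≤ _ := single_le_sum (f := fun i => max (v i - (v i₀ - τ)) 0)
          (fun i _ => le_max_right _ _) (mem_univ i₀)
  have hle : v i₀ - τ ≤ M := by linarith [le_sup' v (mem_univ i₀)]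
  obtain ⟨ν, -, hν⟩ := intermediate_value_Icc' hle (continuous_sum_max_sub v).continuousOn
    ⟨hM.trans_le hτ, hlow⟩
  exact ⟨ν, hν⟩

theorem existsUnique_sum_max_sub_eq [Nonempty ι] (v : ι → ℝ) {τ : ℝ} (hτ : 0 < τ) :
    ∃! ν, ∑ i, max (v i - ν) 0 = τ := by
  obtain ⟨ν, hν⟩ := exists_sum_max_sub_eq v hτ.le
  refine ⟨ν, hν, fun μ hμ => ?_⟩
  rcases lt_trichotomy μ ν with h | h | h
  · linarith [sum_max_sub_lt_of_lt h (hν ▸ hτ)]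
  · exact h
  · linarith [sum_max_sub_lt_of_lt h (hμ ▸ hτ)]

theorem sub_max_sub_mul_le (a ν : ℝ) {y : ℝ} (hy : 0 ≤ y) :
    (a - max (a - ν) 0) * (y - max (a - ν) 0) ≤ ν * (y - max (a - ν) 0) := by
  rcases le_total a ν with h | h
  · rw [max_eq_right (sub_nonpos.2 h)]
    nlinarith
  · rw [max_eq_left (sub_nonneg.2 h), sub_sub_cancel]

theorem norm_sub_toLp_max_sub_le (v y : EuclideanSpace ℝ ι) (ν : ℝ) (hy : ∀ i, 0 ≤ y i)
    (hsum : ∑ i, y i = ∑ i, max (v i - ν) 0) :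
    ‖v - WithLp.toLp 2 (fun i => max (v i - ν) 0)‖ ≤ ‖v - y‖ := by
  refine norm_sub_le_norm_sub_of_inner_le_zero ?_
  calc ⟪v - WithLp.toLp 2 (fun i => max (v i - ν) 0),
        y - WithLp.toLp 2 (fun i => max (v i - ν) 0)⟫
      = ∑ i, (v i - max (v i - ν) 0) * (y i - max (v i - ν) 0) := by
        simp [PiLp.inner_apply, mul_comm]
    _ ≤ ∑ i, ν * (y i - max (v i - ν) 0) := sum_le_sum fun i _ => sub_max_sub_mul_le _ _ (hy i)
    _ = 0 := by rw [← mul_sum, sum_sub_distrib, hsum, sub_self, mul_zero]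

end

theorem stmt_10_general {n : ℕ} (hn : 0 < n) (τ : ℝ) (hτ : 0 < τ)
    (v : EuclideanSpace ℝ (Fin n)) :
    (∃! ν : ℝ, ∑ i, max (v i - ν) 0 = τ) ∧
    ∀ ν : ℝ, (∑ i, max (v i - ν) 0 = τ) →
      ((∑ i, max (v i - ν) 0 = τ ∧ ∀ i, 0 ≤ max (v i - ν) 0) ∧
        ∀ y : EuclideanSpace ℝ (Fin n), (∑ i, y i = τ ∧ ∀ i, 0 ≤ y i) →
          ‖v - (WithLp.equiv 2 (Fin n → ℝ)).symm (fun i => max (v i - ν) 0)‖ ≤ ‖v - y‖) := by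
  have : Nonempty (Fin n) := ⟨⟨0, hn⟩⟩
  refine ⟨existsUnique_sum_max_sub_eq v hτ, fun ν hν => ⟨⟨hν, fun i => le_max_right _ _⟩, ?_⟩⟩
  rintro y ⟨hy, hy₀⟩
  exact norm_sub_toLp_max_sub_le v y ν hy₀ (hy.trans hν.symm)

/-- There is a unique `ν` with `Σ max(vᵢ - ν, 0) = τ`, and the simplex projection
of a nonnegative vector `v` is given componentwise by `max(vᵢ - ν, 0)`. -/
theorem stmt_10 {n : ℕ} (hn : 0 < n) (τ : ℝ) (hτ : 0 < τ)
    (v : EuclideanSpace ℝ (Fin n)) (hv : ∀ i, 0 ≤ v i) :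
    (∃! ν : ℝ, ∑ i, max (v i - ν) 0 = τ) ∧
    ∀ ν : ℝ, (∑ i, max (v i - ν) 0 = τ) →
      ((∑ i, max (v i - ν) 0 = τ ∧ ∀ i, 0 ≤ max (v i - ν) 0) ∧
        ∀ y : EuclideanSpace ℝ (Fin n), (∑ i, y i = τ ∧ ∀ i, 0 ≤ y i) →
          ‖v - (WithLp.equiv 2 (Fin n → ℝ)).symm (fun i => max (v i - ν) 0)‖ ≤ ‖v - y‖) :=
  stmt_10_general hn τ hτ v
end

section
/- Let v ∈ ℝⁿ, τ > 0, and let w = P_{S(τ,n)}(|v|) be the projection of the componentwise absolute value of v onto the simplex. If ‖v‖₁ > τ, then the Euclidean projection of v onto the ℓ₁-ball B(τ) = {x : ‖x‖₁ ≤ τ} equals sign(v) ∘ w (componentwise product); if ‖v‖₁ ≤ τ, the projection is v itself. -/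
/-!
Take `y` in the ball. Then `|y|` has mass at most `τ` and `|v|` mass more than `τ`, so the point
`z` of the segment from `|y|` to `|v|` with mass exactly `τ` lies in the simplex and is
coordinatewise at least as close to `|v|` as `|y|` is. Hence
`‖|v| - w‖ ≤ ‖|v| - z‖ ≤ ‖|v| - |y|‖ ≤ ‖v - y‖`, and restoring the signs of `v` does not increase
the distance: `‖v - sign(v) ∘ w‖ ≤ ‖|v| - w‖`.
-/

open Finset

lemma EuclideanSpace.norm_le_norm_of_abs_le {ι : Type*} [Fintype ι] {a b : EuclideanSpace ℝ ι}
    (h : ∀ i, |a i| ≤ |b i|) : ‖a‖ ≤ ‖b‖ := by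
  simp only [EuclideanSpace.norm_eq, Real.norm_eq_abs]
  exact Real.sqrt_le_sqrt (sum_le_sum fun i _ => pow_le_pow_left₀ (abs_nonneg _) (h i) 2)

lemma Real.abs_sign_mul_le (a b : ℝ) : |Real.sign a * b| ≤ |b| := by
  rcases Real.sign_apply_eq a with h | h | h <;> simp [h]

lemma Real.abs_sub_sign_mul_le {a b : ℝ} (hb : 0 ≤ b) : |a - Real.sign a * b| ≤ |(|a| - b)| := by
  rcases lt_trichotomy a 0 with h | rfl | h
  · rw [Real.sign_of_neg h, abs_of_neg h, show a - -1 * b = -(-a - b) by ring, abs_neg]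
  · simpa [abs_of_nonneg hb]
  · rw [Real.sign_of_pos h, abs_of_pos h, one_mul]

lemma exists_mem_simplex_abs_sub_le {ι : Type*} [Fintype ι] {a b : ι → ℝ} {τ : ℝ}
    (ha : ∀ i, 0 ≤ a i) (hb : ∀ i, 0 ≤ b i) (hbτ : ∑ i, b i ≤ τ) (hτa : τ ≤ ∑ i, a i) :
    ∃ z : ι → ℝ, (∑ i, z i = τ ∧ ∀ i, 0 ≤ z i) ∧ ∀ i, |a i - z i| ≤ |a i - b i| := by
  obtain ⟨t, ht0, ht1, hsum⟩ : ∃ t : ℝ, 0 ≤ t ∧ t ≤ 1 ∧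
      ∑ i, b i + t * (∑ i, a i - ∑ i, b i) = τ := by
    rcases (hbτ.trans hτa).eq_or_lt with hab | hab
    · exact ⟨0, le_rfl, zero_le_one, by linarith⟩
    · refine ⟨(τ - ∑ i, b i) / (∑ i, a i - ∑ i, b i), div_nonneg (by linarith) (by linarith),
        (div_le_one (by linarith)).mpr (by linarith), ?_⟩
      rw [div_mul_cancel₀ _ (by linarith)]
      ring
  refine ⟨fun i => b i + t * (a i - b i), ⟨?_, fun i => ?_⟩, fun i => ?_⟩
  · simpa [sum_add_distrib, ← mul_sum] using hsum
  · nlinarith [ha i, hb i]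
  · rw [show a i - (b i + t * (a i - b i)) = (1 - t) * (a i - b i) by ring, abs_mul,
      abs_of_nonneg (by linarith : (0 : ℝ) ≤ 1 - t)]
    exact mul_le_of_le_one_left (abs_nonneg _) (by linarith)

theorem stmt_11_general {n : ℕ} (τ : ℝ) (v : EuclideanSpace ℝ (Fin n))
    (w : EuclideanSpace ℝ (Fin n))
    (hwS : (∑ i, w i = τ ∧ ∀ i, 0 ≤ w i) ∧
      ∀ y : EuclideanSpace ℝ (Fin n), (∑ i, y i = τ ∧ ∀ i, 0 ≤ y i) →
        ‖(WithLp.equiv 2 (Fin n → ℝ)).symm (fun i => |v i|) - w‖ ≤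
          ‖(WithLp.equiv 2 (Fin n → ℝ)).symm (fun i => |v i|) - y‖) :
    ((∑ i, |v i|) > τ →
      ((∑ i, |Real.sign (v i) * w i|) ≤ τ ∧
        ∀ y ∈ {x : EuclideanSpace ℝ (Fin n) | ∑ i, |x i| ≤ τ},
          ‖v - (WithLp.equiv 2 (Fin n → ℝ)).symm (fun i => Real.sign (v i) * w i)‖ ≤
            ‖v - y‖)) ∧
    ((∑ i, |v i|) ≤ τ →
      (v ∈ {x : EuclideanSpace ℝ (Fin n) | ∑ i, |x i| ≤ τ} ∧
        ∀ y ∈ {x : EuclideanSpace ℝ (Fin n) | ∑ i, |x i| ≤ τ}, ‖v - v‖ ≤ ‖v - y‖)) := by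
  obtain ⟨⟨hsum, hpos⟩, hopt⟩ := hwS
  refine ⟨fun hgt => ⟨?_, fun y hy => ?_⟩, fun hle => ⟨hle, fun y _ => by simp⟩⟩
  · calc ∑ i, |Real.sign (v i) * w i| ≤ ∑ i, |w i| :=
        sum_le_sum fun i _ => Real.abs_sign_mul_le _ _
      _ = τ := by simp_rw [abs_of_nonneg (hpos _), hsum]
  obtain ⟨z, hz, hzy⟩ := exists_mem_simplex_abs_sub_le (fun i => abs_nonneg (v i))
    (fun i => abs_nonneg (y i)) hy hgt.le
  calc ‖v - (WithLp.equiv 2 (Fin n → ℝ)).symm (fun i => Real.sign (v i) * w i)‖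
      ≤ ‖(WithLp.equiv 2 (Fin n → ℝ)).symm (fun i => |v i|) - w‖ :=
        EuclideanSpace.norm_le_norm_of_abs_le fun i => by
          simpa using Real.abs_sub_sign_mul_le (a := v i) (hpos i)
    _ ≤ ‖(WithLp.equiv 2 (Fin n → ℝ)).symm (fun i => |v i|) - WithLp.toLp 2 z‖ := hopt _ hz
    _ ≤ ‖v - y‖ :=
        EuclideanSpace.norm_le_norm_of_abs_le fun i => by
          simpa using (hzy i).trans (abs_abs_sub_abs_le_abs_sub (v i) (y i))

/-- Reduction of the ℓ₁-ball projection to a simplex projection: if `w` is the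
projection of `|v|` onto the simplex `S(τ,n)`, then the projection of `v` onto
the ℓ₁-ball of radius `τ` is `sign(v) ∘ w` when `‖v‖₁ > τ`, and `v` otherwise. -/
theorem stmt_11 {n : ℕ} (τ : ℝ) (hτ : 0 < τ) (v : EuclideanSpace ℝ (Fin n))
    (w : EuclideanSpace ℝ (Fin n))
    (hwS : (∑ i, w i = τ ∧ ∀ i, 0 ≤ w i) ∧
      ∀ y : EuclideanSpace ℝ (Fin n), (∑ i, y i = τ ∧ ∀ i, 0 ≤ y i) →
        ‖(WithLp.equiv 2 (Fin n → ℝ)).symm (fun i => |v i|) - w‖ ≤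
          ‖(WithLp.equiv 2 (Fin n → ℝ)).symm (fun i => |v i|) - y‖) :
    ((∑ i, |v i|) > τ →
      ((∑ i, |Real.sign (v i) * w i|) ≤ τ ∧
        ∀ y ∈ {x : EuclideanSpace ℝ (Fin n) | ∑ i, |x i| ≤ τ},
          ‖v - (WithLp.equiv 2 (Fin n → ℝ)).symm (fun i => Real.sign (v i) * w i)‖ ≤
            ‖v - y‖)) ∧
    ((∑ i, |v i|) ≤ τ →
      (v ∈ {x : EuclideanSpace ℝ (Fin n) | ∑ i, |x i| ≤ τ} ∧
        ∀ y ∈ {x : EuclideanSpace ℝ (Fin n) | ∑ i, |x i| ≤ τ}, ‖v - v‖ ≤ ‖v - y‖)) :=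
  stmt_11_general τ v w hwS
end

section
/- Let v ∈ ℝⁿ₊, τ > 0, and set ν₀ = (Σ_i v_i − τ)/n. If there exists an index j with v_j − ν₀ < 0, then Σ_{i=1}^n max(v_i − ν₀, 0) > τ, and consequently the unique root ν of Σ_i max(v_i − ν, 0) = τ satisfies ν > ν₀. In particular, the j-th component of the simplex projection P_{S(τ,n)}(v) is zero, and more generally every index l with v_l − ν₀ ≤ 0 has (P_{S(τ,n)}(v))_l = 0. -/
/-! The shift `ν₀` is exactly the one for which the unclipped sum `Σᵢ (vᵢ - ν₀)` equals `τ`.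
Clipping at zero can only increase each term, and strictly increases the negative term at `j`,
so `Σᵢ max(vᵢ - ν₀, 0) > τ`. Since `ν ↦ Σᵢ max(vᵢ - ν, 0)` is antitone, its root `ν` must lie
strictly above `ν₀`, which kills every component with `v_l ≤ ν₀`. -/

open Finset

variable {ι : Type*} [Fintype ι]

theorem sum_sub_div_card_eq [Nonempty ι] (v : ι → ℝ) (τ : ℝ) :
    ∑ i, (v i - ((∑ i, v i) - τ) / Fintype.card ι) = τ := by
  have hcard : (Fintype.card ι : ℝ) ≠ 0 := Nat.cast_ne_zero.mpr Fintype.card_ne_zero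
  rw [sum_sub_distrib, sum_const, card_univ, nsmul_eq_mul, mul_div_cancel₀ _ hcard]
  ring

theorem sum_lt_sum_max_zero {x : ι → ℝ} {j : ι} (hj : x j < 0) :
    ∑ i, x i < ∑ i, max (x i) 0 :=
  sum_lt_sum (fun i _ => le_max_left _ _) ⟨j, mem_univ j, by rwa [max_eq_right hj.le]⟩

theorem antitone_sum_max_sub_zero (v : ι → ℝ) :
    Antitone fun c : ℝ => ∑ i, max (v i - c) 0 :=
  fun _ _ hab => sum_le_sum fun _ _ => max_le_max (sub_le_sub_left hab _) le_rfl

theorem stmt_14_general {n : ℕ} (τ : ℝ)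
    (v : EuclideanSpace ℝ (Fin n))
    (ν₀ : ℝ) (hν₀ : ν₀ = ((∑ i, v i) - τ) / n)
    (j : Fin n) (hj : v j - ν₀ < 0) :
    (∑ i, max (v i - ν₀) 0) > τ ∧
    ∀ ν : ℝ, (∑ i, max (v i - ν) 0 = τ) →
      ν > ν₀ ∧ max (v j - ν) 0 = 0 ∧ ∀ l, v l - ν₀ ≤ 0 → max (v l - ν) 0 = 0 := by
  have : Nonempty (Fin n) := ⟨j⟩
  have hsum : ∑ i, (v i - ν₀) = τ := by
    simpa only [Fintype.card_fin, ← hν₀] using sum_sub_div_card_eq (fun i => v i) τ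
  have hgt : τ < ∑ i, max (v i - ν₀) 0 := hsum ▸ sum_lt_sum_max_zero hj
  refine ⟨hgt, fun ν hν => ?_⟩
  have hlt : ν₀ < ν := lt_of_not_ge fun hle =>
    (hgt.trans_le (antitone_sum_max_sub_zero (fun i => v i) hle)).ne' hν
  have hzero : ∀ l, v l - ν₀ ≤ 0 → max (v l - ν) 0 = 0 := fun l hl => max_eq_right (by linarith)
  exact ⟨hlt, hzero j hj.le, hzero⟩

/-- If some component of the hyperplane projection is negative
(`v_j - ν₀ < 0` with `ν₀ = (Σᵢvᵢ - τ)/n`), then `Σᵢ max(vᵢ - ν₀, 0) > τ`, the unique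
root `ν` of `Σᵢ max(vᵢ - ν, 0) = τ` satisfies `ν > ν₀`, and every index `l` with
`v_l - ν₀ ≤ 0` has zero `l`-th component in the simplex projection `max(v_l - ν, 0) = 0`. -/
theorem stmt_14 {n : ℕ} (hn : 0 < n) (τ : ℝ) (hτ : 0 < τ)
    (v : EuclideanSpace ℝ (Fin n)) (hv : ∀ i, 0 ≤ v i)
    (ν₀ : ℝ) (hν₀ : ν₀ = ((∑ i, v i) - τ) / n)
    (j : Fin n) (hj : v j - ν₀ < 0) :
    (∑ i, max (v i - ν₀) 0) > τ ∧
    ∀ ν : ℝ, (∑ i, max (v i - ν) 0 = τ) →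
      ν > ν₀ ∧ max (v j - ν) 0 = 0 ∧ ∀ l, v l - ν₀ ≤ 0 → max (v l - ν) 0 = 0 :=
  stmt_14_general τ v ν₀ hν₀ j hj
end
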